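/- Let κ be a regular cardinal and θ ≤ κ an infinite regular cardinal. Assume: (a) μ is a singular cardinal with cf(μ) = θ and κ⁺ < μ; (b) (μ_i : i < θ) is a strictly increasing sequence of regular cardinals with supremum μ and κ⁺ < μ_0; (c) J is an ideal on θ extending the ideal of bounded subsets of θ; (d) (f_α : α < λ) witnesses tcf(∏_{i<θ} μ_i, J) = λ; (e) μ ≤ ν < λ; (f) for every A ⊆ λ with |A| = κ⁺ one has |{f_α(i) : α ∈ A, i < θ}| = κ⁺. Then 𝔤𝔭_κ ≠ ν. -/

import Mathlib

/-!
Suppose `𝔤𝔭_κ = ν`. Each `μᵢ` is below `ν`, so by minimality of `ν` there is a bad family `Cᵢ`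
of `μᵢ⁺` clubs of `κ⁺`: no `κ⁺` of them meet in a club. The clubs
`D_α = ⋂_{i<θ} Cᵢ (f_α i)`, `α < ν⁺`, form a family of `ν⁺` clubs (as `θ < κ⁺ = cf κ⁺`), so
`κ⁺` of them, indexed by `A`, meet in a club `E`. For fixed `i` every `Cᵢ (f_α i)` with `α ∈ A`
contains `E`, so badness of `Cᵢ` leaves at most `κ` values `f_α i`. Thus
`{f_α i : α ∈ A, i < θ}` has size at most `θ · κ = κ < κ⁺`.
-/

open Cardinal Set

universe u

/-- `C` is a club subset of the ordinal `δ`: it consists of ordinals below `δ`,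
is unbounded in `δ`, and contains every limit ordinal `β < δ` with `sup (C ∩ β) = β`. -/
def IsClubIn (δ : Ordinal) (C : Set Ordinal) : Prop :=
  C ⊆ Set.Iio δ ∧ (∀ a < δ, ∃ b ∈ C, a ≤ b) ∧
    ∀ β < δ, Order.IsSuccLimit β → sSup (C ∩ Set.Iio β) = β → β ∈ C

/-- `A` is a set of ordinals of cardinality `c` (witnessed by a bijective
enumeration of `A` by the ordinals below `c.ord`). -/
def HasCard (A : Set Ordinal.{u}) (c : Cardinal.{u}) : Prop :=
  ∃ e : Ordinal → Ordinal, Set.BijOn e (Set.Iio c.ord) A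

/-- An ideal on the set of ordinals below `θ`. -/
structure IdealOn (θ : Ordinal) where
  sets : Set (Set Ordinal)
  subset_Iio : ∀ A ∈ sets, A ⊆ Set.Iio θ
  mem_of_subset : ∀ A ∈ sets, ∀ B ⊆ A, B ∈ sets
  union_mem : ∀ A ∈ sets, ∀ B ∈ sets, A ∪ B ∈ sets
  proper : Set.Iio θ ∉ sets

/-- `(f α : α < lam.ord)` is a `<_J`-increasing, `<_J`-cofinal sequence in the
product `∏_{i<θ} μs i`, witnessing `tcf (∏_{i<θ} μs i, J) = lam`. -/
def IsTcfWitness (θ : Ordinal) (J : IdealOn θ) (μs : Ordinal → Cardinal)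
    (lam : Cardinal) (f : Ordinal → Ordinal → Ordinal) : Prop :=
  (∀ α < lam.ord, ∀ i < θ, f α i < (μs i).ord) ∧
  (∀ α β, α < β → β < lam.ord → {i | i < θ ∧ f β i ≤ f α i} ∈ J.sets) ∧
  (∀ g : Ordinal → Ordinal, (∀ i < θ, g i < (μs i).ord) →
    ∃ α < lam.ord, {i | i < θ ∧ f α i ≤ g i} ∈ J.sets)

/-- The Galvin cardinal characteristic `𝔤𝔭`: the least cardinal `κ` such that every
family `{C α : α < κ⁺}` of clubs of `ω₁` has a subfamily of size `ℵ₁`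
whose intersection is a club of `ω₁`. -/
noncomputable def gp : Cardinal.{u} :=
  sInf {κ : Cardinal.{u} | ∀ C : Ordinal.{u} → Set Ordinal.{u},
    (∀ α < (Order.succ κ).ord, IsClubIn (Cardinal.aleph 1).ord (C α)) →
    ∃ b : Ordinal.{u} → Ordinal.{u},
      (∀ β < (Cardinal.aleph 1).ord, b β < (Order.succ κ).ord) ∧
      Set.InjOn b (Set.Iio (Cardinal.aleph 1).ord) ∧
      IsClubIn (Cardinal.aleph 1).ord (⋂ β ∈ Set.Iio (Cardinal.aleph 1).ord, C (b β))}

/-- The generalized Galvin characteristic `𝔤𝔭_κ`: the least `lam` such that every family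
`{C α : α < lam⁺}` of clubs of `κ⁺` has a subfamily of size `κ⁺` whose intersection
is a club of `κ⁺`. -/
noncomputable def gpK (κ : Cardinal.{u}) : Cardinal.{u} :=
  sInf {lam : Cardinal.{u} | ∀ C : Ordinal.{u} → Set Ordinal.{u},
    (∀ α < (Order.succ lam).ord, IsClubIn (Order.succ κ).ord (C α)) →
    ∃ b : Ordinal.{u} → Ordinal.{u},
      (∀ β < (Order.succ κ).ord, b β < (Order.succ lam).ord) ∧
      Set.InjOn b (Set.Iio (Order.succ κ).ord) ∧
      IsClubIn (Order.succ κ).ord (⋂ β ∈ Set.Iio (Order.succ κ).ord, C (b β))}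

universe v

namespace IsClubIn

variable {δ β : Ordinal.{u}} {X : Set Ordinal.{u}}

theorem mem_of_cofinal (hX : IsClubIn δ X) (hβ : β < δ) (hβ0 : β ≠ 0)
    (h : ∀ x < β, ∃ y ∈ X, x < y ∧ y < β) : β ∈ X := by
  have hlim : Order.IsSuccLimit β := Ordinal.isSuccLimit_iff.2 ⟨hβ0,
    Order.isSuccPrelimit_of_succ_lt fun x hx =>
      let ⟨_, _, hxy, hyβ⟩ := h x hx
      (Order.succ_le_of_lt hxy).trans_lt hyβ⟩
  refine hX.2.2 β hβ hlim (le_antisymm (csSup_le' fun _ hx => hx.2.le)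
    (le_of_forall_lt fun x hx => ?_))
  obtain ⟨y, hyX, hxy, hyβ⟩ := h x hx
  exact hxy.trans_le (le_csSup ⟨β, fun z hz => hz.2.le⟩ ⟨hyX, hyβ⟩)

theorem mem_of_sSup_subset {S : Set Ordinal.{u}} (hX : IsClubIn δ X) (hS : S ⊆ X)
    (hβ : β < δ) (hlim : Order.IsSuccLimit β) (hsup : sSup (S ∩ Iio β) = β) : β ∈ X :=
  hX.mem_of_cofinal hβ hlim.ne_bot fun _ hx =>
    let ⟨y, hy, hxy⟩ := exists_lt_of_lt_csSup' (hsup.symm ▸ hx)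
    ⟨y, hS hy.1, hxy, hy.2⟩

end IsClubIn

section iInter

variable {ι : Type v} {δ : Ordinal.{u}} {X : ι → Set Ordinal.{u}}

theorem isClubIn_iInter [Nonempty ι] (hX : ∀ i, IsClubIn δ (X i))
    (hunb : ∀ a < δ, ∃ b ∈ ⋂ i, X i, a ≤ b) : IsClubIn δ (⋂ i, X i) :=
  ⟨(iInter_subset _ (Classical.arbitrary ι)).trans (hX _).1, hunb,
    fun _ hβ hlim hsup => mem_iInter.2 fun i =>
      (hX i).mem_of_sSup_subset (iInter_subset _ i) hβ hlim hsup⟩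

/-- Closing off: iterate `x ↦ ⨆ i, (w i x + 1)`, where `w i x ∈ X i` lies above `x`; the
supremum of the iterates is a limit point of every `X i`. -/
theorem exists_mem_iInter_ge_of_lift_mk_lt_cof (hδ : ℵ₀ < δ.cof)
    (hι : Cardinal.lift.{u} #ι < Cardinal.lift.{v} δ.cof) (hX : ∀ i, IsClubIn δ (X i))
    {a : Ordinal.{u}} (ha : a < δ) : ∃ b ∈ ⋂ i, X i, a ≤ b := by
  choose! w hwX hwle using fun i => (hX i).2.1
  have hwδ : ∀ i, ∀ x < δ, w i x < δ := fun i x hx => (hX i).1 (hwX i x hx)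
  let F : Ordinal.{u} → Ordinal.{u} := fun x => ⨆ i, w i x + 1
  have hFδ : ∀ x < δ, F x < δ := fun x hx =>
    Ordinal.lift_iSup_add_one_lt_of_lt_cof (by rwa [← Ordinal.lift_cof]) (hwδ · x hx)
  have hwF : ∀ i, ∀ x < δ, w i x < F x := fun i x hx =>
    (Order.lt_add_one_iff.2 le_rfl).trans_le
      (le_ciSup (f := fun i => w i x + 1) ⟨δ, by
        rintro _ ⟨j, rfl⟩
        exact Order.add_one_le_of_lt (hwδ j x hx)⟩ i)
  have hb : Ordinal.nfp F a < δ := Ordinal.nfp_lt_ord hδ hFδ ha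
  have hiter : ∀ n, F^[n] a < δ := fun n => (Ordinal.iterate_le_nfp F a n).trans_lt hb
  have hstep : ∀ i n, w i (F^[n] a) < Ordinal.nfp F a := fun i n =>
    (hwF i _ (hiter n)).trans_le <| by
      simpa only [Function.iterate_succ_apply'] using Ordinal.iterate_le_nfp F a (n + 1)
  refine ⟨Ordinal.nfp F a, mem_iInter.2 fun i => (hX i).mem_of_cofinal hb ?_ fun x hx => ?_,
    Ordinal.le_nfp F a⟩
  · exact (zero_le.trans_lt (hstep i 0)).ne'
  · obtain ⟨n, hn⟩ := Ordinal.lt_nfp_iff.1 hx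
    exact ⟨w i (F^[n] a), hwX i _ (hiter n), hn.trans_le (hwle i _ (hiter n)), hstep i n⟩

theorem isClubIn_iInter_of_lift_mk_lt_cof [Nonempty ι] (hδ : ℵ₀ < δ.cof)
    (hι : Cardinal.lift.{u} #ι < Cardinal.lift.{v} δ.cof) (hX : ∀ i, IsClubIn δ (X i)) :
    IsClubIn δ (⋂ i, X i) :=
  isClubIn_iInter hX fun _ ha => exists_mem_iInter_ge_of_lift_mk_lt_cof hδ hι hX ha

end iInter

theorem exists_injOn_mapsTo_of_mk_le {α : Type*} {s t : Set α} (h : #s ≤ #t) :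
    ∃ g : α → α, MapsTo g s t ∧ InjOn g s := by
  classical
  obtain ⟨g⟩ := h
  refine ⟨fun x => if hx : x ∈ s then g ⟨x, hx⟩ else x, fun x hx => by simp [hx],
    fun x hx y hy hxy => ?_⟩
  simp only [dif_pos hx, dif_pos hy] at hxy
  exact congrArg Subtype.val (g.injective (Subtype.ext hxy))

theorem mk_image2_le {α β γ : Type v} {f : α → β → γ} {s : Set α} {t : Set β}
    {c : Cardinal} (hc : ℵ₀ ≤ c) (ht : #t ≤ c) (h : ∀ b ∈ t, #((f · b) '' s) ≤ c) :
    #(image2 f s t) ≤ c := by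
  rw [← iUnion_image_right]
  calc #(⋃ b ∈ t, (f · b) '' s) ≤ #t * ⨆ b : t, #((f · b) '' s) := mk_biUnion_le _ _
    _ ≤ c * c := mul_le_mul' ht (ciSup_le' fun b => h b b.2)
    _ = c := mul_eq_self hc

theorem lt_sSup_image_Iio {o i : Ordinal.{u}} {μs : Ordinal.{u} → Cardinal.{u}}
    (ho : Order.IsSuccLimit o) (hmono : ∀ i j, i < j → j < o → μs i < μs j) (hi : i < o) :
    μs i < sSup (μs '' Iio o) :=
  (hmono i _ (Order.lt_succ i) (ho.succ_lt hi)).trans_le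
    (le_csSup Cardinal.bddAbove_of_small ⟨_, ho.succ_lt hi, rfl⟩)

theorem HasCard.mk_eq {A : Set Ordinal.{u}} {c : Cardinal.{u}} (h : HasCard A c) :
    #A = Cardinal.lift.{u + 1} c := by
  obtain ⟨e, he⟩ := h
  rw [← Cardinal.mk_congr (he.equiv e), Cardinal.mk_Iio_ordinal, card_ord]

section Galvin

variable {κ lam : Cardinal.{u}}

def HasClubSubfamily (κ lam : Cardinal.{u}) (C : Ordinal.{u} → Set Ordinal.{u}) : Prop :=
  ∃ b : Ordinal.{u} → Ordinal.{u},
    (∀ β < (Order.succ κ).ord, b β < (Order.succ lam).ord) ∧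
    InjOn b (Iio (Order.succ κ).ord) ∧
    IsClubIn (Order.succ κ).ord (⋂ β ∈ Iio (Order.succ κ).ord, C (b β))

def HasGalvinProperty (κ lam : Cardinal.{u}) : Prop :=
  ∀ C : Ordinal.{u} → Set Ordinal.{u},
    (∀ α < (Order.succ lam).ord, IsClubIn (Order.succ κ).ord (C α)) → HasClubSubfamily κ lam C

theorem gpK_eq_sInf (κ : Cardinal.{u}) : gpK κ = sInf {lam | HasGalvinProperty κ lam} := rfl

theorem hasGalvinProperty_gpK (h : gpK κ ≠ 0) : HasGalvinProperty κ (gpK κ) := by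
  rw [gpK_eq_sInf] at h ⊢
  refine csInf_mem (s := {lam | HasGalvinProperty κ lam}) (nonempty_iff_ne_empty.2 fun he => h ?_)
  rw [he, Cardinal.sInf_empty]

theorem not_hasGalvinProperty_of_lt_gpK (h : lam < gpK κ) : ¬HasGalvinProperty κ lam :=
  notMem_of_lt_csInf' h

theorem mk_le_of_not_hasClubSubfamily {C : Ordinal.{u} → Set Ordinal.{u}}
    {A D : Set Ordinal.{u}} (hC : ∀ α < (Order.succ lam).ord, IsClubIn (Order.succ κ).ord (C α))
    (hbad : ¬HasClubSubfamily κ lam C) (hD : IsClubIn (Order.succ κ).ord D)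
    (hA : A ⊆ Iio (Order.succ lam).ord) (hDA : ∀ α ∈ A, D ⊆ C α) :
    #A ≤ Cardinal.lift.{u + 1} κ := by
  by_contra! hlt
  have hle : #(Iio (Order.succ κ).ord) ≤ #A := by
    rw [Cardinal.mk_Iio_ordinal, card_ord, lift_succ]
    exact Order.succ_le_of_lt hlt
  obtain ⟨g, hgA, hginj⟩ := exists_injOn_mapsTo_of_mk_le hle
  have : Nonempty (Iio (Order.succ κ).ord) := ⟨⟨0, ord_pos.2 (Order.bot_lt_succ κ)⟩⟩
  refine hbad ⟨g, fun β hβ => hA (hgA hβ), hginj, ?_⟩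
  rw [biInter_eq_iInter]
  exact isClubIn_iInter (fun β => hC _ (hA (hgA β.2))) fun a ha =>
    (hD.2.1 a ha).imp fun _ hb => ⟨mem_iInter.2 fun β => hDA _ (hgA β.2) hb.1, hb.2⟩

theorem exists_injOn_mk_image_le {ν : Cardinal.{u}} {o : Ordinal.{u}}
    {c : Ordinal.{u} → Cardinal.{u}} {f : Ordinal.{u} → Ordinal.{u} → Ordinal.{u}}
    (hκ : ℵ₀ ≤ κ) (ho : o.card ≤ κ) (ho0 : o ≠ 0) (hν : HasGalvinProperty κ ν)
    (hc : ∀ i < o, ¬HasGalvinProperty κ (c i))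
    (hf : ∀ α < (Order.succ ν).ord, ∀ i < o, f α i < (Order.succ (c i)).ord) :
    ∃ b : Ordinal.{u} → Ordinal.{u}, (∀ β < (Order.succ κ).ord, b β < (Order.succ ν).ord) ∧
      InjOn b (Iio (Order.succ κ).ord) ∧
      ∀ i < o, #((f · i) '' (b '' Iio (Order.succ κ).ord)) ≤ Cardinal.lift.{u + 1} κ := by
  have hbad : ∀ i < o, ∃ C : Ordinal.{u} → Set Ordinal.{u},
      (∀ α < (Order.succ (c i)).ord, IsClubIn (Order.succ κ).ord (C α)) ∧
        ¬HasClubSubfamily κ (c i) C := fun i hi => by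
    simpa only [HasGalvinProperty, not_forall, exists_prop] using hc i hi
  choose! C hC hCbad using hbad
  have hcof : (Order.succ κ).ord.cof = Order.succ κ := (isRegular_succ hκ).cof_ord
  have : Nonempty (Iio o) := ⟨⟨0, pos_iff_ne_zero.2 ho0⟩⟩
  have hclub : ∀ α < (Order.succ ν).ord,
      IsClubIn (Order.succ κ).ord (⋂ i : Iio o, C i (f α i)) := fun α hα =>
    isClubIn_iInter_of_lift_mk_lt_cof (by rw [hcof]; exact hκ.trans_lt (Order.lt_succ κ))
      (by rw [Cardinal.mk_Iio_ordinal, lift_lift, hcof, lift_lt]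
          exact ho.trans_lt (Order.lt_succ κ))
      fun i => hC i i.2 _ (hf α hα i i.2)
  obtain ⟨b, hbν, hbinj, hbclub⟩ := hν _ hclub
  refine ⟨b, hbν, hbinj, fun i hi => mk_le_of_not_hasClubSubfamily (hC i hi) (hCbad i hi)
    hbclub ?_ ?_⟩
  · rintro _ ⟨_, ⟨β, hβ, rfl⟩, rfl⟩
    exact hf _ (hbν β hβ) i hi
  · rintro _ ⟨_, ⟨β, hβ, rfl⟩, rfl⟩
    exact (biInter_subset_of_mem hβ).trans (iInter_subset_of_subset ⟨i, hi⟩ subset_rfl)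

end Galvin

theorem gpK_ne_of_scale_general (κ θ μ ν lam : Cardinal.{u}) (μs : Ordinal.{u} → Cardinal.{u})
    (J : IdealOn θ.ord) (f : Ordinal.{u} → Ordinal.{u} → Ordinal.{u})
    (hκ : κ.IsRegular) (hθ : θ.IsRegular) (hθκ : θ ≤ κ)
    (hmono : ∀ i j, i < j → j < θ.ord → μs i < μs j)
    (hsup : sSup (μs '' Set.Iio θ.ord) = μ)
    (hf : IsTcfWitness θ.ord J μs lam f)
    (hμν : μ ≤ ν) (hνlam : ν < lam)
    (hA : ∀ A : Set Ordinal.{u}, A ⊆ Set.Iio lam.ord →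
      HasCard A (Order.succ κ) →
      HasCard {x : Ordinal | ∃ α ∈ A, ∃ i < θ.ord, f α i = x} (Order.succ κ)) :
    gpK κ ≠ ν := by
  intro hgp
  have hθlim : Order.IsSuccLimit θ.ord := isSuccLimit_ord hθ.aleph0_le
  have hμs : ∀ i < θ.ord, μs i < ν := fun i hi =>
    (hsup ▸ lt_sSup_image_Iio hθlim hmono hi).trans_le hμν
  have hθκ' : θ.ord.card ≤ κ := by rwa [card_ord]
  have hν0 : ν ≠ 0 := (hμs 0 hθlim.bot_lt).ne_bot
  have hord : (Order.succ ν).ord ≤ lam.ord := ord_le_ord.2 (Order.succ_le_of_lt hνlam)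
  obtain ⟨b, hbν, hbinj, hslice⟩ := exists_injOn_mk_image_le (f := f) hκ.aleph0_le hθκ'
    hθlim.ne_bot (hgp ▸ hasGalvinProperty_gpK (hgp ▸ hν0))
    (fun i hi => not_hasGalvinProperty_of_lt_gpK (hgp ▸ hμs i hi))
    fun α hα i hi => (hf.1 α (hα.trans_le hord) i hi).trans_le (ord_le_ord.2 (Order.le_succ _))
  have hbig : #(image2 f (b '' Iio (Order.succ κ).ord) (Iio θ.ord)) =
      Cardinal.lift.{u + 1} (Order.succ κ) :=
    (hA _ (image_subset_iff.2 fun β hβ => (hbν β hβ).trans_le hord)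
      ⟨b, hbinj.bijOn_image⟩).mk_eq
  have hsmall : #(image2 f (b '' Iio (Order.succ κ).ord) (Iio θ.ord)) ≤
      Cardinal.lift.{u + 1} κ :=
    mk_image2_le (aleph0_le_lift.2 hκ.aleph0_le)
      (by rwa [Cardinal.mk_Iio_ordinal, lift_le]) hslice
  rw [hbig, lift_le] at hsmall
  exact (Order.lt_succ κ).not_ge hsmall

/-- Let `κ` be regular, `θ ≤ κ` infinite regular, `μ` singular with
`cf μ = θ` and `κ⁺ < μ`, `(μs i : i < θ)` strictly increasing regular with supremum `μ`
and `κ⁺ < μs 0`, `J` an ideal on `θ` extending the bounded ideal, `f` a witness for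
`tcf (∏_{i<θ} μs i, J) = lam`, `μ ≤ ν < lam`, and suppose every `A ⊆ lam` of size `κ⁺`
satisfies `|{f α i : α ∈ A, i < θ}| = κ⁺`. Then `𝔤𝔭_κ ≠ ν`. -/
theorem gpK_ne_of_scale (κ θ μ ν lam : Cardinal.{u}) (μs : Ordinal.{u} → Cardinal.{u})
    (J : IdealOn θ.ord) (f : Ordinal.{u} → Ordinal.{u} → Ordinal.{u})
    (hκ : κ.IsRegular) (hθ : θ.IsRegular) (hθκ : θ ≤ κ)
    (hcof : μ.ord.cof = θ) (hκμ : Order.succ κ < μ)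
    (hreg : ∀ i < θ.ord, (μs i).IsRegular)
    (hmono : ∀ i j, i < j → j < θ.ord → μs i < μs j)
    (hsup : sSup (μs '' Set.Iio θ.ord) = μ)
    (hμs0 : Order.succ κ < μs 0)
    (hJ : ∀ δ < θ.ord, Set.Iio δ ∈ J.sets)
    (hf : IsTcfWitness θ.ord J μs lam f)
    (hμν : μ ≤ ν) (hνlam : ν < lam)
    (hA : ∀ A : Set Ordinal.{u}, A ⊆ Set.Iio lam.ord →
      HasCard A (Order.succ κ) →
      HasCard {x : Ordinal | ∃ α ∈ A, ∃ i < θ.ord, f α i = x} (Order.succ κ)) :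
    gpK κ ≠ ν :=
  gpK_ne_of_scale_general κ θ μ ν lam μs J f hκ hθ hθκ hmono hsup hf hμν hνlam hA
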